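/- Let 0 < σ < 1/3, 0 < s < σ/40, 0 < c < 10/σ, and let j ∈ {0,1,2,3}. There exist a constant C > 0 and N₀ ∈ ℕ (depending only on d, σ, s, c, j) such that for all N ≥ N₀, every eigen-data configuration of size N satisfying Condition R(N,s), and every real t ≥ 0: N^{−2s} Δ₂^j δ₂^t ≤ ∑_{n=2}^N ν_n Δ_n^j δ_n^t ≤ C δ₂^t (N^{4s} Δ₂^j + N^{1+s} δ₂^{ct}). -/

import Mathlib

open Finset MeasureTheory
open scoped Classical

noncomputable section

/-- The Marchenko–Pastur density `ρ_d`. -/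
def mpDensity (d x : ℝ) : ℝ :=
  if 0 < x then
    (1 / (2 * Real.pi * d)) *
      Real.sqrt (max (((1 + Real.sqrt d) ^ 2 - x) * (x - (1 - Real.sqrt d) ^ 2)) 0) / x
  else 0

/-- The quantile `γ_n`: the smallest `t` with `∫_{(-∞,t]} ρ_d = n/N`. -/
def mpQuantile (d : ℝ) (N n : ℕ) : ℝ :=
  sInf {t : ℝ | (∫ x in Set.Iic t, mpDensity d x) = (n : ℝ) / N}

/-- An eigen-data configuration of size `N`: eigenvalues `0 < λ₁ ≤ ⋯ ≤ λ_N` and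
nonnegative weights `β₁, …, β_N` with `β₁ > 0` and `∑ β_n² = 1`. -/
structure EigenData (N : ℕ) where
  lam : ℕ → ℝ
  beta : ℕ → ℝ
  lam_pos : 0 < lam 1
  lam_mono : ∀ m n, 1 ≤ m → m ≤ n → n ≤ N → lam m ≤ lam n
  beta_nonneg : ∀ n, 1 ≤ n → n ≤ N → 0 ≤ beta n
  beta_one_pos : 0 < beta 1
  beta_norm : ∑ n ∈ Finset.Icc 1 N, (beta n) ^ 2 = 1

namespace EigenData

variable {N : ℕ}

/-- `δ_n = λ₁²/λ_n²`. -/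
def δ (E : EigenData N) (n : ℕ) : ℝ := E.lam 1 ^ 2 / E.lam n ^ 2

/-- `Δ_n = λ_n - λ₁`. -/
def Δ (E : EigenData N) (n : ℕ) : ℝ := E.lam n - E.lam 1

/-- `ν_n = β_n²/β₁²`. -/
def ν (E : EigenData N) (n : ℕ) : ℝ := E.beta n ^ 2 / E.beta 1 ^ 2

/-- Condition R(N,s): delocalization, edge gaps and rigidity. -/
def CondR (d s : ℝ) (E : EigenData N) : Prop :=
  (∀ n ∈ Finset.Icc 1 N, E.beta n ≤ (N : ℝ) ^ (-1 / 2 + s / 2 : ℝ)) ∧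
  (∀ n ∈ ({1, 2, N - 1, N} : Set ℕ), (N : ℝ) ^ (-1 / 2 - s / 2 : ℝ) ≤ E.beta n) ∧
  (∀ n ∈ ({N - 1, N - 2} : Set ℕ),
    (N : ℝ) ^ (-2 / 3 - s / 2 : ℝ) ≤ E.lam N - E.lam n ∧
      E.lam N - E.lam n ≤ (N : ℝ) ^ (-2 / 3 + s / 2 : ℝ)) ∧
  (∀ n ∈ ({2, 3} : Set ℕ),
    (N : ℝ) ^ (-2 / 3 - s / 2 : ℝ) ≤ E.lam n - E.lam 1 ∧
      E.lam n - E.lam 1 ≤ (N : ℝ) ^ (-2 / 3 + s / 2 : ℝ)) ∧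
  (∀ n ∈ Finset.Icc 1 N, |E.lam n - mpQuantile d N n| ≤
    (N : ℝ) ^ (-2 / 3 + s / 2 : ℝ) * ((min n (N - n + 1) : ℕ) : ℝ) ^ (-1 / 3 : ℝ))

/-- Condition L(N,p): `λ₂/λ₃ < (λ₁/λ₂)^p`. -/
def CondL (p : ℝ) (E : EigenData N) : Prop :=
  E.lam 2 / E.lam 3 < (E.lam 1 / E.lam 2) ^ p

/-- The QR error function `E_QR(t)`. -/
def EQR (E : EigenData N) (t : ℝ) : ℝ :=
  (∑ n ∈ Finset.Icc 1 N, E.lam n ^ 2 * E.δ n ^ t * E.ν n) /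
      (∑ n ∈ Finset.Icc 1 N, E.δ n ^ t * E.ν n) -
    (∑ n ∈ Finset.Icc 1 N, E.lam n * E.δ n ^ t * E.ν n) ^ 2 /
      (∑ n ∈ Finset.Icc 1 N, E.δ n ^ t * E.ν n) ^ 2

/-- The QR halting time `T_{QR,ε} = inf {t ≥ 0 : E_QR(t) ≤ ε²}`. -/
def TQR (E : EigenData N) (ε : ℝ) : ℝ :=
  sInf {t : ℝ | 0 ≤ t ∧ E.EQR t ≤ ε ^ 2}

/-- The approximate QR halting time `T*_{QR,ε}` with `ε = N^{-α/2}`. -/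
def TstarQR (E : EigenData N) (α : ℝ) : ℝ :=
  (α * Real.log N + 2 * Real.log (E.Δ 2) + Real.log (E.ν 2)) / Real.log (E.δ 2)⁻¹

/-- The inverse power method iterate `λ_IP(t)`. -/
def lamIP (E : EigenData N) (t : ℝ) : ℝ :=
  (∑ n ∈ Finset.Icc 1 N, E.lam n ^ (-2 * t : ℝ) * E.beta n ^ 2) /
    (∑ n ∈ Finset.Icc 1 N, E.lam n ^ (-2 * t - 1 : ℝ) * E.beta n ^ 2)

/-- The inverse power method error `E_IP(t) = λ_IP(t+1)⁻¹ - λ_IP(t)⁻¹`. -/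
def EIP (E : EigenData N) (t : ℝ) : ℝ := (E.lamIP (t + 1))⁻¹ - (E.lamIP t)⁻¹

/-- The inverse power method halting time `T_{IP,ε} = inf {t ≥ 0 : E_IP(t) ≤ ε²}`. -/
def TIP (E : EigenData N) (ε : ℝ) : ℝ :=
  sInf {t : ℝ | 0 ≤ t ∧ E.EIP t ≤ ε ^ 2}

/-- The leading part `E_{IP,0}(t)` of the inverse power method error. -/
def EIP0 (E : EigenData N) (t : ℝ) : ℝ :=
  (∑ n ∈ Finset.Icc 2 N, (1 - E.δ n) * ((E.lam 1)⁻¹ - (E.lam n)⁻¹) * E.δ n ^ t * E.ν n) /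
    ((∑ n ∈ Finset.Icc 1 N, E.δ n ^ t * E.ν n) *
      (∑ n ∈ Finset.Icc 1 N, E.δ n ^ (t + 1) * E.ν n))

/-- The remainder `E_{IP,1}(t) = E_IP(t) - E_{IP,0}(t)`. -/
def EIP1 (E : EigenData N) (t : ℝ) : ℝ := E.EIP t - E.EIP0 t

/-- The approximate inverse power halting time `T*_{IP,ε}` with `ε = N^{-α/2}`. -/
def TstarIP (E : EigenData N) (α : ℝ) : ℝ :=
  (α * Real.log N + 2 * Real.log (1 - E.δ 2 ^ ((1 : ℝ) / 2)) +
      Real.log ((E.lam 2)⁻¹ + (E.lam 1)⁻¹) + Real.log (E.ν 2)) / Real.log (E.δ 2)⁻¹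

end EigenData

end

/-!
The lower bound is the single term `n = 2`, as delocalization gives `ν₂ ≥ N^{-2s}`.
For the upper bound, split the indices according to whether `δ_n ≥ δ₂^{1+c}`.
Such "near" indices satisfy `λ_n ≤ λ₁ (λ₂/λ₁)^{1+c} ≤ λ₁ + 2(1+c)Δ₂`, so `λ_n` lies within
`O(N^{-2/3+s/2})` of the edge `λ₋` (which `λ₁` sticks to by rigidity). Since the
Marchenko–Pastur CDF grows like `(x - λ₋)^{3/2}` at the edge, rigidity leaves only
`O(N^{3s/4})` near indices, each contributing at most `N^{2s} (2(1+c))^3 Δ₂^j δ₂^t`.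
The far indices have `δ_n^t ≤ δ₂^t δ₂^{ct}` and `Δ_n ≤ 5`, and `∑ ν_n ≤ β₁^{-2} ≤ N^{1+s}`.
-/

open Filter Topology

noncomputable section

def mpLeftEdge (d : ℝ) : ℝ := (1 - √d) ^ 2

def mpRightEdge (d : ℝ) : ℝ := (1 + √d) ^ 2

def mpCDF (d t : ℝ) : ℝ := ∫ x in Set.Iic t, mpDensity d x

end

section MarchenkoPastur

open Set

variable {d : ℝ}

lemma mpRightEdge_sub_mpLeftEdge (d : ℝ) : mpRightEdge d - mpLeftEdge d = 4 * √d := by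
  unfold mpRightEdge mpLeftEdge; ring

lemma mpLeftEdge_pos (hd1 : d < 1) : 0 < mpLeftEdge d := by
  have : √d < 1 := (Real.sqrt_lt' one_pos).2 (by linarith)
  unfold mpLeftEdge; nlinarith

lemma mpLeftEdge_add_sqrt_le_one (hd0 : 0 < d) (hd1 : d < 1) : mpLeftEdge d + √d ≤ 1 := by
  have h := Real.sq_sqrt hd0.le
  have : √d < 1 := (Real.sqrt_lt' one_pos).2 (by linarith)
  unfold mpLeftEdge; nlinarith [Real.sqrt_nonneg d]

lemma mpRightEdge_lt_four (hd0 : 0 < d) (hd1 : d < 1) : mpRightEdge d < 4 := by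
  have : √d < 1 := (Real.sqrt_lt' one_pos).2 (by linarith)
  unfold mpRightEdge; nlinarith [Real.sqrt_nonneg d]

lemma mpDensity_of_pos {x : ℝ} (hx : 0 < x) :
    mpDensity d x = √((mpRightEdge d - x) * (x - mpLeftEdge d)) / (2 * Real.pi * d * x) := by
  rw [mpDensity, if_pos hx, mpRightEdge, mpLeftEdge]
  rcases le_total 0 (((1 + √d) ^ 2 - x) * (x - (1 - √d) ^ 2)) with h | h
  · rw [max_eq_left h]; ring
  · rw [max_eq_right h, Real.sqrt_eq_zero'.2 h, Real.sqrt_zero]; ring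

lemma mpDensity_nonneg (hd0 : 0 < d) (x : ℝ) : 0 ≤ mpDensity d x := by
  unfold mpDensity
  split_ifs
  · have := Real.pi_pos; positivity
  · exact le_rfl

lemma mpDensity_eq_zero_of_le {x : ℝ} (hx : x ≤ mpLeftEdge d) :
    mpDensity d x = 0 := by
  rcases le_or_gt x 0 with h0 | h0
  · simp [mpDensity, not_lt.2 h0]
  have : (mpRightEdge d - x) * (x - mpLeftEdge d) ≤ 0 :=
    mul_nonpos_of_nonneg_of_nonpos
      (by linarith [mpRightEdge_sub_mpLeftEdge d, Real.sqrt_nonneg d]) (by linarith)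
  rw [mpDensity_of_pos h0, Real.sqrt_eq_zero'.2 this, zero_div]

lemma mpDensity_eq_zero_of_ge {x : ℝ} (hx : mpRightEdge d ≤ x) :
    mpDensity d x = 0 := by
  rcases le_or_gt x 0 with h0 | h0
  · simp [mpDensity, not_lt.2 h0]
  have : (mpRightEdge d - x) * (x - mpLeftEdge d) ≤ 0 :=
    mul_nonpos_of_nonpos_of_nonneg (by linarith)
      (by linarith [mpRightEdge_sub_mpLeftEdge d, Real.sqrt_nonneg d])
  rw [mpDensity_of_pos h0, Real.sqrt_eq_zero'.2 this, zero_div]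

lemma exists_mpDensity_le_sqrt (hd0 : 0 < d) (hd1 : d < 1) :
    ∃ k > 0, ∀ x, mpDensity d x ≤ k * √(x - mpLeftEdge d) := by
  have hL := mpLeftEdge_pos hd1
  have := Real.pi_pos
  refine ⟨√(4 * √d) / (2 * Real.pi * d * mpLeftEdge d), by positivity, fun x => ?_⟩
  rcases le_or_gt x (mpLeftEdge d) with hx | hx
  · rw [mpDensity_eq_zero_of_le hx]; positivity
  rw [mpDensity_of_pos (hL.trans hx), div_mul_eq_mul_div, ← Real.sqrt_mul (by positivity)]
  have hprod : (mpRightEdge d - x) * (x - mpLeftEdge d) ≤ 4 * √d * (x - mpLeftEdge d) :=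
    mul_le_mul_of_nonneg_right (by linarith [mpRightEdge_sub_mpLeftEdge d]) (by linarith)
  exact div_le_div₀ (by positivity) (Real.sqrt_le_sqrt hprod) (by positivity)
    (mul_le_mul_of_nonneg_left hx.le (by positivity))

lemma exists_sqrt_le_mpDensity (hd0 : 0 < d) (hd1 : d < 1) :
    ∃ k > 0, ∀ x, mpLeftEdge d ≤ x → x ≤ mpLeftEdge d + √d →
      k * √(x - mpLeftEdge d) ≤ mpDensity d x := by
  have hL := mpLeftEdge_pos hd1
  have h1 := mpLeftEdge_add_sqrt_le_one hd0 hd1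
  have := Real.pi_pos
  have hsd : 0 < √d := Real.sqrt_pos.2 hd0
  refine ⟨√(√d) / (2 * Real.pi * d), by positivity, fun x hx hx' => ?_⟩
  have hx0 : 0 < x := hL.trans_le hx
  rw [mpDensity_of_pos hx0, div_mul_eq_mul_div, ← Real.sqrt_mul hsd.le]
  have hprod : √d * (x - mpLeftEdge d) ≤ (mpRightEdge d - x) * (x - mpLeftEdge d) :=
    mul_le_mul_of_nonneg_right (by linarith [mpRightEdge_sub_mpLeftEdge d]) (by linarith)
  refine div_le_div₀ (Real.sqrt_nonneg _) (Real.sqrt_le_sqrt hprod) (by positivity) ?_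
  exact mul_le_of_le_one_right (by positivity) (by linarith)

lemma integrable_mpDensity (hd0 : 0 < d) (hd1 : d < 1) : Integrable (mpDensity d) := by
  obtain ⟨k, hk, hρ⟩ := exists_mpDensity_le_sqrt hd0 hd1
  set I := Icc (mpLeftEdge d) (mpRightEdge d)
  have hmeas : Measurable (mpDensity d) :=
    Measurable.ite (measurableSet_lt measurable_const measurable_id) (by fun_prop)
      measurable_const
  refine Integrable.mono' (g := I.indicator fun _ => k * √(mpRightEdge d - mpLeftEdge d))
    ((integrable_indicator_iff measurableSet_Icc).2 (integrableOn_const measure_Icc_lt_top.ne))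
    hmeas.aestronglyMeasurable (Eventually.of_forall fun x => ?_)
  rw [Real.norm_of_nonneg (mpDensity_nonneg hd0 x), indicator_apply]
  split_ifs with hx
  · exact (hρ x).trans (by gcongr; exact hx.2)
  · rcases not_and_or.1 hx with hx | hx
    · rw [mpDensity_eq_zero_of_le (le_of_not_ge hx)]
    · rw [mpDensity_eq_zero_of_ge (le_of_not_ge hx)]

lemma mpCDF_sub_mpCDF (hd0 : 0 < d) (hd1 : d < 1) (a b : ℝ) :
    mpCDF d b - mpCDF d a = ∫ x in a..b, mpDensity d x :=
  intervalIntegral.integral_Iic_sub_Iic (integrable_mpDensity hd0 hd1).integrableOn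
    (integrable_mpDensity hd0 hd1).integrableOn

lemma continuous_mpCDF (hd0 : 0 < d) (hd1 : d < 1) : Continuous (mpCDF d) := by
  have h : mpCDF d = fun t => mpCDF d 0 + ∫ x in (0 : ℝ)..t, mpDensity d x := by
    funext t; rw [← mpCDF_sub_mpCDF hd0 hd1]; ring
  rw [h]
  exact continuous_const.add ((integrable_mpDensity hd0 hd1).continuous_primitive 0)

lemma monotone_mpCDF (hd0 : 0 < d) (hd1 : d < 1) : Monotone (mpCDF d) := fun _ _ hab =>
  setIntegral_mono_set (integrable_mpDensity hd0 hd1).integrableOn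
    (Eventually.of_forall (mpDensity_nonneg hd0)) (Set.Iic_subset_Iic.2 hab).eventuallyLE

lemma mpCDF_eq_zero_of_le {t : ℝ} (ht : t ≤ mpLeftEdge d) : mpCDF d t = 0 :=
  setIntegral_eq_zero_of_forall_eq_zero fun _ hx => mpDensity_eq_zero_of_le (le_trans hx ht)

lemma mpCDF_eq_of_ge (hd0 : 0 < d) (hd1 : d < 1) {t : ℝ} (ht : mpRightEdge d ≤ t) :
    mpCDF d t = mpCDF d (mpRightEdge d) := by
  rw [← sub_eq_zero, mpCDF_sub_mpCDF hd0 hd1, intervalIntegral.integral_congr (g := fun _ => 0),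
    intervalIntegral.integral_zero]
  intro x hx
  rw [uIcc_of_le ht] at hx
  exact mpDensity_eq_zero_of_ge hx.1

lemma mul_sqrt_eq_rpow {h : ℝ} (hh : 0 ≤ h) : h * √h = h ^ (3 / 2 : ℝ) := by
  rw [Real.sqrt_eq_rpow, ← Real.rpow_one_add' hh (by norm_num)]; norm_num

lemma exists_mpCDF_le (hd0 : 0 < d) (hd1 : d < 1) :
    ∃ k > 0, ∀ h, 0 ≤ h → mpCDF d (mpLeftEdge d + h) ≤ k * h ^ (3 / 2 : ℝ) := by
  obtain ⟨k, hk, hρ⟩ := exists_mpDensity_le_sqrt hd0 hd1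
  refine ⟨k, hk, fun h hh => ?_⟩
  have hle : ∫ x in mpLeftEdge d..mpLeftEdge d + h, mpDensity d x
      ≤ ∫ x in mpLeftEdge d..mpLeftEdge d + h, k * √h :=
    intervalIntegral.integral_mono_on (by linarith)
      (integrable_mpDensity hd0 hd1).intervalIntegrable intervalIntegrable_const
      fun x hx => (hρ x).trans (by gcongr; linarith [hx.2])
  rw [← mpCDF_sub_mpCDF hd0 hd1, mpCDF_eq_zero_of_le le_rfl, sub_zero,
    intervalIntegral.integral_const, smul_eq_mul, add_sub_cancel_left] at hle
  rw [← mul_sqrt_eq_rpow hh]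
  linarith

lemma exists_le_mpCDF (hd0 : 0 < d) (hd1 : d < 1) :
    ∃ k > 0, ∀ h, 0 ≤ h → h ≤ √d →
      k * h ^ (3 / 2 : ℝ) ≤ mpCDF d (mpLeftEdge d + h) := by
  obtain ⟨k, hk, hρ⟩ := exists_sqrt_le_mpDensity hd0 hd1
  refine ⟨k / 4, by positivity, fun h hh hhd => ?_⟩
  set L := mpLeftEdge d
  -- on `[L + h/2, L + h]` the density is at least `k √(h/2) ≥ k √h / 2`
  have hsqrt : √h / 2 ≤ √(h / 2) := by
    rw [show √h / 2 = √(h / 4) by rw [Real.sqrt_div' _ (by norm_num : (0:ℝ) ≤ 4),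
      show (4 : ℝ) = 2 ^ 2 by norm_num, Real.sqrt_sq (by norm_num)]]
    exact Real.sqrt_le_sqrt (by linarith)
  have hge :
      ∫ x in L + h / 2..L + h, k * (√h / 2) ≤ ∫ x in L + h / 2..L + h, mpDensity d x :=
    intervalIntegral.integral_mono_on (by linarith) intervalIntegrable_const
      (integrable_mpDensity hd0 hd1).intervalIntegrable
      fun x hx => (mul_le_mul_of_nonneg_left (hsqrt.trans (Real.sqrt_le_sqrt
        (by linarith [hx.1]))) hk.le).trans (hρ x (by linarith [hx.1]) (by linarith [hx.2]))
  rw [← mpCDF_sub_mpCDF hd0 hd1, intervalIntegral.integral_const, smul_eq_mul] at hge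
  have hmid := mpCDF_eq_zero_of_le (le_refl L) ▸
    monotone_mpCDF hd0 hd1 (show L ≤ L + h / 2 by linarith)
  rw [← mul_sqrt_eq_rpow hh]
  nlinarith [Real.sqrt_nonneg h]

lemma mpLeftEdge_lt_of_mpCDF_pos {t : ℝ} (ht : 0 < mpCDF d t) : mpLeftEdge d < t := by
  by_contra! h
  exact ht.ne' (mpCDF_eq_zero_of_le h)

lemma mpLeftEdge_le_of_mpCDF_eq {N n : ℕ} (hn : 0 < n) (hN : 0 < N) {t : ℝ}
    (ht : mpCDF d t = n / N) : mpLeftEdge d ≤ t :=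
  (mpLeftEdge_lt_of_mpCDF_pos (ht ▸ by positivity)).le

-- The first alternative covers the junk value `sInf ∅ = 0`.
lemma mpQuantile_eq_zero_or (hd0 : 0 < d) (hd1 : d < 1) {N n : ℕ} (hn : 0 < n) (hN : 0 < N) :
    mpQuantile d N n = 0 ∨ (mpCDF d (mpQuantile d N n) = n / N ∧
      mpLeftEdge d ≤ mpQuantile d N n ∧ mpQuantile d N n ≤ mpRightEdge d) := by
  set S := {t : ℝ | mpCDF d t = n / N}
  have hbdd : BddBelow S := ⟨mpLeftEdge d, fun _ => mpLeftEdge_le_of_mpCDF_eq hn hN⟩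
  rcases S.eq_empty_or_nonempty with hS | hS
  · left; exact (congrArg sInf hS).trans Real.sInf_empty
  right
  have hmem : mpQuantile d N n ∈ S :=
    (isClosed_eq (continuous_mpCDF hd0 hd1) continuous_const).csInf_mem hS hbdd
  refine ⟨hmem, mpLeftEdge_le_of_mpCDF_eq hn hN hmem, ?_⟩
  by_contra! h
  have : mpRightEdge d ∈ S := (mpCDF_eq_of_ge hd0 hd1 h.le).symm.trans hmem
  exact (csInf_le hbdd this).not_gt h

lemma mpQuantile_mem_Icc_of_le_mpCDF (hd0 : 0 < d) (hd1 : d < 1) {N n : ℕ} (hn : 0 < n)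
    (hN : 0 < N) {t : ℝ} (ht : n / N ≤ mpCDF d t) :
    mpQuantile d N n ∈ Icc (mpLeftEdge d) t := by
  have hpos : (0 : ℝ) < n / N := by positivity
  obtain ⟨x, hx, hFx⟩ := intermediate_value_Icc
    (mpLeftEdge_lt_of_mpCDF_pos (hpos.trans_le ht)).le (continuous_mpCDF hd0 hd1).continuousOn
    ⟨(mpCDF_eq_zero_of_le le_rfl).trans_le hpos.le, ht⟩
  have hbdd : BddBelow {t : ℝ | mpCDF d t = n / N} :=
    ⟨mpLeftEdge d, fun _ => mpLeftEdge_le_of_mpCDF_eq hn hN⟩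
  exact ⟨le_csInf ⟨x, hFx⟩ fun _ => mpLeftEdge_le_of_mpCDF_eq hn hN,
    (csInf_le hbdd hFx).trans hx.2⟩

end MarchenkoPastur

lemma one_add_rpow_le {r p : ℝ} (hr : 0 ≤ r) (hp : 0 ≤ p) (hpr : p * r ≤ 1) :
    (1 + r) ^ p ≤ 1 + 2 * (p * r) := by
  have hpr0 : 0 ≤ p * r := mul_nonneg hp hr
  have hexp := Real.abs_exp_sub_one_le (x := p * r) (by rwa [abs_of_nonneg hpr0])
  rw [abs_of_nonneg hpr0] at hexp
  calc (1 + r) ^ p = Real.exp (Real.log (1 + r) * p) := Real.rpow_def_of_pos (by linarith) p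
    _ ≤ Real.exp (p * r) := by
        have := Real.log_le_sub_one_of_pos (show 0 < 1 + r by linarith)
        exact Real.exp_le_exp.2 (by nlinarith)
    _ ≤ 1 + 2 * (p * r) := by linarith [le_abs_self (Real.exp (p * r) - 1)]

lemma natCast_card_le_of_forall_le {A : Finset ℕ} {x : ℝ} (hx : 0 ≤ x)
    (hA : ∀ n ∈ A, 1 ≤ n ∧ (n : ℝ) ≤ x) : (#A : ℝ) ≤ x := by
  have hsub : A ⊆ Icc 1 ⌊x⌋₊ := fun n hn =>
    mem_Icc.2 ⟨(hA n hn).1, Nat.le_floor (hA n hn).2⟩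
  calc (#A : ℝ) ≤ ⌊x⌋₊ := by
        exact_mod_cast (Finset.card_le_card hsub).trans (by rw [Nat.card_Icc]; omega)
    _ ≤ x := Nat.floor_le hx

lemma tendsto_natCast_rpow_of_neg {e : ℝ} (he : e < 0) :
    Tendsto (fun N : ℕ => (N : ℝ) ^ e) atTop (𝓝 0) := by
  have := (tendsto_rpow_neg_atTop (neg_pos.2 he)).comp tendsto_natCast_atTop_atTop
  simpa [Function.comp_def] using this

namespace EigenData

variable {N : ℕ} (E : EigenData N) {n j : ℕ} {d s t p : ℝ}

lemma lam_one_le (hn : n ∈ Icc 1 N) : E.lam 1 ≤ E.lam n :=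
  E.lam_mono 1 n le_rfl (mem_Icc.1 hn).1 (mem_Icc.1 hn).2

lemma lam_pos_of_mem (hn : n ∈ Icc 1 N) : 0 < E.lam n := E.lam_pos.trans_le (E.lam_one_le hn)

lemma Δ_nonneg (hn : n ∈ Icc 1 N) : 0 ≤ E.Δ n := sub_nonneg.2 (E.lam_one_le hn)

lemma ν_nonneg (n : ℕ) : 0 ≤ E.ν n := by unfold ν; positivity

lemma δ_nonneg (n : ℕ) : 0 ≤ E.δ n := by unfold δ; positivity

lemma δ_pos (hn : n ∈ Icc 1 N) : 0 < E.δ n := by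
  have := E.lam_pos_of_mem hn
  have := E.lam_pos
  unfold δ; positivity

lemma δ_le_δ_two (hn : n ∈ Icc 2 N) : E.δ n ≤ E.δ 2 := by
  have h2 : 2 ∈ Icc 1 N := mem_Icc.2 ⟨one_le_two, (mem_Icc.1 hn).1.trans (mem_Icc.1 hn).2⟩
  have := E.lam_pos_of_mem h2
  unfold δ
  gcongr
  exact E.lam_mono 2 n one_le_two (mem_Icc.1 hn).1 (mem_Icc.1 hn).2

lemma Δ_le_of_δ_two_rpow_le (hn : n ∈ Icc 1 N) (hN : 2 ≤ N) (hp : 0 ≤ p)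
    (hpΔ : p * E.Δ 2 ≤ E.lam 1) (h : E.δ 2 ^ p ≤ E.δ n) : E.Δ n ≤ 2 * p * E.Δ 2 := by
  have h₁ : 0 < E.lam 1 := E.lam_pos
  have h₂ : 0 < E.lam 2 := E.lam_pos_of_mem (mem_Icc.2 ⟨one_le_two, hN⟩)
  have hΔ₂ : 0 ≤ E.Δ 2 := E.Δ_nonneg (mem_Icc.2 ⟨one_le_two, hN⟩)
  have hx := E.lam_pos_of_mem hn
  -- invert `δ₂ ^ p ≤ δ_n` and take square roots
  have hratio : E.lam n / E.lam 1 ≤ (1 + E.Δ 2 / E.lam 1) ^ p := by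
    have hb : 1 + E.Δ 2 / E.lam 1 = E.lam 2 / E.lam 1 := by unfold Δ; field_simp; ring
    have hδ₂ : E.δ 2 = ((E.lam 2 / E.lam 1) ^ 2)⁻¹ := by unfold δ; field_simp
    have hδn : E.δ n = ((E.lam n / E.lam 1) ^ 2)⁻¹ := by unfold δ; field_simp
    rw [hδ₂, hδn, Real.inv_rpow (by positivity), ← Real.rpow_pow_comm (by positivity)] at h
    rw [hb]
    exact (pow_le_pow_iff_left₀ (by positivity) (by positivity) two_ne_zero).1
      ((inv_le_inv₀ (by positivity) (by positivity)).1 h)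
  have hbound := one_add_rpow_le (div_nonneg hΔ₂ h₁.le) hp
    (by rw [mul_div_assoc', div_le_one h₁]; exact hpΔ)
  have := (div_le_iff₀ h₁).1 (hratio.trans hbound)
  rw [add_mul, one_mul, mul_assoc, mul_div_assoc', div_mul_cancel₀ _ h₁.ne'] at this
  unfold Δ at this ⊢; linarith

lemma ν_mul_Δ_pow_mul_δ_rpow_nonneg (hn : n ∈ Icc 1 N) (j : ℕ) (t : ℝ) :
    0 ≤ E.ν n * E.Δ n ^ j * E.δ n ^ t :=
  mul_nonneg (mul_nonneg (E.ν_nonneg n) (pow_nonneg (E.Δ_nonneg hn) j))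
    (Real.rpow_nonneg (E.δ_nonneg n) t)

lemma ν_two_mul_le_sum (hN : 2 ≤ N) (j : ℕ) (t : ℝ) :
    E.ν 2 * E.Δ 2 ^ j * E.δ 2 ^ t ≤ ∑ n ∈ Icc 2 N, E.ν n * E.Δ n ^ j * E.δ n ^ t :=
  single_le_sum (f := fun n => E.ν n * E.Δ n ^ j * E.δ n ^ t)
    (fun _ hn => E.ν_mul_Δ_pow_mul_δ_rpow_nonneg (Icc_subset_Icc one_le_two le_rfl hn) j t)
    (mem_Icc.2 ⟨le_rfl, hN⟩)

lemma sum_near_le (hj : j ≤ 3) (ht : 0 ≤ t) (hN : 2 ≤ N) (hp : 1 ≤ p)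
    (hpΔ : p * E.Δ 2 ≤ E.lam 1) {B : ℝ} (hν : ∀ n ∈ Icc 2 N, E.ν n ≤ B) :
    ∑ n ∈ Icc 2 N with E.δ 2 ^ p ≤ E.δ n, E.ν n * E.Δ n ^ j * E.δ n ^ t ≤
      #{n ∈ Icc 2 N | E.δ 2 ^ p ≤ E.δ n} * (B * (2 * p) ^ 3 * E.Δ 2 ^ j * E.δ 2 ^ t) := by
  rw [← nsmul_eq_mul]
  refine sum_le_card_nsmul _ _ _ fun n hn => ?_
  obtain ⟨hn, hδ⟩ := mem_filter.1 hn
  have hn1 : n ∈ Icc 1 N := Icc_subset_Icc one_le_two le_rfl hn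
  have hΔ₂ : 0 ≤ E.Δ 2 := E.Δ_nonneg (mem_Icc.2 ⟨one_le_two, hN⟩)
  have hΔ : E.Δ n ^ j ≤ (2 * p) ^ 3 * E.Δ 2 ^ j := calc
    E.Δ n ^ j ≤ (2 * p * E.Δ 2) ^ j := pow_le_pow_left₀ (E.Δ_nonneg hn1)
        (E.Δ_le_of_δ_two_rpow_le hn1 hN (by linarith) hpΔ hδ) j
    _ = (2 * p) ^ j * E.Δ 2 ^ j := mul_pow _ _ _
    _ ≤ (2 * p) ^ 3 * E.Δ 2 ^ j := by gcongr; linarith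
  have hδ : E.δ n ^ t ≤ E.δ 2 ^ t := Real.rpow_le_rpow (E.δ_nonneg n) (E.δ_le_δ_two hn) ht
  have hB : 0 ≤ B := (E.ν_nonneg n).trans (hν n hn)
  calc E.ν n * E.Δ n ^ j * E.δ n ^ t ≤ B * ((2 * p) ^ 3 * E.Δ 2 ^ j) * E.δ 2 ^ t :=
        mul_le_mul (mul_le_mul (hν n hn) hΔ (pow_nonneg (E.Δ_nonneg hn1) j) hB) hδ
          (Real.rpow_nonneg (E.δ_nonneg n) t) (by positivity)
    _ = B * (2 * p) ^ 3 * E.Δ 2 ^ j * E.δ 2 ^ t := by ring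

lemma sum_far_le (hj : j ≤ 3) (ht : 0 ≤ t) {R : ℝ} (hR : 1 ≤ R)
    (hΔ : ∀ n ∈ Icc 2 N, E.Δ n ≤ R) :
    ∑ n ∈ Icc 2 N with ¬ E.δ 2 ^ p ≤ E.δ n, E.ν n * E.Δ n ^ j * E.δ n ^ t ≤
      R ^ 3 * (∑ n ∈ Icc 2 N, E.ν n) * E.δ 2 ^ (p * t) := by
  have hδ₂ : 0 ≤ E.δ 2 ^ (p * t) := Real.rpow_nonneg (E.δ_nonneg 2) _
  calc _ ≤ ∑ n ∈ Icc 2 N with ¬ E.δ 2 ^ p ≤ E.δ n,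
          E.ν n * (R ^ 3 * E.δ 2 ^ (p * t)) := by
        refine sum_le_sum fun n hn => ?_
        obtain ⟨hn, hδ⟩ := mem_filter.1 hn
        have hΔj : E.Δ n ^ j ≤ R ^ 3 := (pow_le_pow_left₀
          (E.Δ_nonneg (Icc_subset_Icc one_le_two le_rfl hn)) (hΔ n hn) j).trans
          (pow_le_pow_right₀ hR hj)
        have hδt : E.δ n ^ t ≤ E.δ 2 ^ (p * t) := by
          rw [Real.rpow_mul (E.δ_nonneg 2)]
          exact Real.rpow_le_rpow (E.δ_nonneg n) (not_le.1 hδ).le ht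
        rw [mul_assoc]
        exact mul_le_mul_of_nonneg_left (mul_le_mul hΔj hδt (Real.rpow_nonneg (E.δ_nonneg n) t)
          (by positivity)) (E.ν_nonneg n)
    _ ≤ ∑ n ∈ Icc 2 N, E.ν n * (R ^ 3 * E.δ 2 ^ (p * t)) :=
        sum_le_sum_of_subset_of_nonneg (filter_subset _ _)
          fun n _ _ => mul_nonneg (E.ν_nonneg n) (by positivity)
    _ = _ := by rw [← sum_mul]; ring

lemma sum_le_near_add_far (hj : j ≤ 3) (ht : 0 ≤ t) (hN : 2 ≤ N) (hp : 1 ≤ p)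
    (hpΔ : p * E.Δ 2 ≤ E.lam 1) {B M R : ℝ} (hν : ∀ n ∈ Icc 2 N, E.ν n ≤ B)
    (hM : 0 ≤ M)
    (hcount : ∀ n ∈ Icc 2 N, E.Δ n ≤ 2 * p * E.Δ 2 → (n : ℝ) ≤ M) (hR : 1 ≤ R)
    (hΔ : ∀ n ∈ Icc 2 N, E.Δ n ≤ R) :
    ∑ n ∈ Icc 2 N, E.ν n * E.Δ n ^ j * E.δ n ^ t ≤
      M * (B * (2 * p) ^ 3 * E.Δ 2 ^ j * E.δ 2 ^ t) +
        R ^ 3 * (∑ n ∈ Icc 2 N, E.ν n) * E.δ 2 ^ (p * t) := by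
  rw [← sum_filter_add_sum_filter_not _ (fun n => E.δ 2 ^ p ≤ E.δ n)]
  refine add_le_add ((E.sum_near_le hj ht hN hp hpΔ hν).trans ?_) (E.sum_far_le hj ht hR hΔ)
  have hΔ₂ : 0 ≤ E.Δ 2 := E.Δ_nonneg (mem_Icc.2 ⟨one_le_two, hN⟩)
  have hB : 0 ≤ B := (E.ν_nonneg 2).trans (hν 2 (mem_Icc.2 ⟨le_rfl, hN⟩))
  refine mul_le_mul_of_nonneg_right (natCast_card_le_of_forall_le hM fun n hn => ?_)
    (mul_nonneg (by positivity) (Real.rpow_nonneg (E.δ_nonneg 2) t))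
  obtain ⟨hn, hδ⟩ := mem_filter.1 hn
  have hn1 : n ∈ Icc 1 N := Icc_subset_Icc one_le_two le_rfl hn
  exact ⟨(mem_Icc.1 hn1).1,
    hcount n hn (E.Δ_le_of_δ_two_rpow_le hn1 hN (by linarith) hpΔ hδ)⟩

namespace CondR

variable {E}

lemma beta_sq_le (hR : E.CondR d s) (hn : n ∈ Icc 1 N) :
    E.beta n ^ 2 ≤ (N : ℝ) ^ (-1 + s) := by
  have hβ := pow_le_pow_left₀ (E.beta_nonneg n (mem_Icc.1 hn).1 (mem_Icc.1 hn).2) (hR.1 n hn) 2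
  rwa [← Real.rpow_mul_natCast (Nat.cast_nonneg N),
    show (-1 / 2 + s / 2) * ((2 : ℕ) : ℝ) = -1 + s by push_cast; ring] at hβ

lemma rpow_le_beta_sq (hR : E.CondR d s) (hn : n ∈ ({1, 2, N - 1, N} : Set ℕ)) :
    (N : ℝ) ^ (-1 - s) ≤ E.beta n ^ 2 := by
  have hβ := pow_le_pow_left₀ (Real.rpow_nonneg (Nat.cast_nonneg N) _) (hR.2.1 n hn) 2
  rwa [← Real.rpow_mul_natCast (Nat.cast_nonneg N),
    show (-1 / 2 - s / 2) * ((2 : ℕ) : ℝ) = -1 - s by push_cast; ring] at hβ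

lemma ν_le (hR : E.CondR d s) (hN : 0 < N) (hn : n ∈ Icc 1 N) :
    E.ν n ≤ (N : ℝ) ^ (2 * s) := by
  have hN' : (0 : ℝ) < N := Nat.cast_pos.2 hN
  calc E.ν n ≤ (N : ℝ) ^ (-1 + s) / (N : ℝ) ^ (-1 - s) :=
        div_le_div₀ (by positivity) (hR.beta_sq_le hn) (by positivity)
          (hR.rpow_le_beta_sq (by simp))
    _ = (N : ℝ) ^ (2 * s) := by rw [← Real.rpow_sub hN']; ring_nf

lemma rpow_le_ν_two (hR : E.CondR d s) (hN : 0 < N) : (N : ℝ) ^ (-2 * s) ≤ E.ν 2 := by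
  have hN' : (0 : ℝ) < N := Nat.cast_pos.2 hN
  calc (N : ℝ) ^ (-2 * s) = (N : ℝ) ^ (-1 - s) / (N : ℝ) ^ (-1 + s) := by
        rw [← Real.rpow_sub hN']; ring_nf
    _ ≤ E.ν 2 := div_le_div₀ (sq_nonneg _) (hR.rpow_le_beta_sq (by simp))
        (pow_pos E.beta_one_pos 2) (hR.beta_sq_le (mem_Icc.2 ⟨le_rfl, hN⟩))

lemma sum_ν_le (hR : E.CondR d s) (hN : 0 < N) :
    ∑ n ∈ Icc 2 N, E.ν n ≤ (N : ℝ) ^ (1 + s) := by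
  have hN' : (0 : ℝ) < N := Nat.cast_pos.2 hN
  have hsum : ∑ n ∈ Icc 2 N, E.beta n ^ 2 ≤ 1 := E.beta_norm ▸
    sum_le_sum_of_subset_of_nonneg (Icc_subset_Icc one_le_two le_rfl) fun _ _ _ => sq_nonneg _
  calc ∑ n ∈ Icc 2 N, E.ν n = (∑ n ∈ Icc 2 N, E.beta n ^ 2) / E.beta 1 ^ 2 := by
        rw [sum_div]; rfl
    _ ≤ 1 / (N : ℝ) ^ (-1 - s) :=
        div_le_div₀ zero_le_one hsum (by positivity) (hR.rpow_le_beta_sq (by simp))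
    _ = (N : ℝ) ^ (1 + s) := by rw [one_div, ← Real.rpow_neg hN'.le]; ring_nf

lemma abs_lam_sub_mpQuantile_le (hR : E.CondR d s) (hn : n ∈ Icc 1 N) :
    |E.lam n - mpQuantile d N n| ≤ (N : ℝ) ^ (-2 / 3 + s / 2) := by
  have hmin : (1 : ℝ) ≤ (min n (N - n + 1) : ℕ) := by
    exact_mod_cast le_min (mem_Icc.1 hn).1 (Nat.le_add_left 1 _)
  exact (hR.2.2.2.2 n hn).trans (mul_le_of_le_one_right (by positivity)
    (Real.rpow_le_one_of_one_le_of_nonpos hmin (by norm_num)))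

lemma Δ_two_le (hR : E.CondR d s) : E.Δ 2 ≤ (N : ℝ) ^ (-2 / 3 + s / 2) :=
  (hR.2.2.2.1 2 (by simp)).2

lemma Δ_le_five (hR : E.CondR d s) (hd0 : 0 < d) (hd1 : d < 1) (hs : s ≤ 4 / 3)
    (hn : n ∈ Icc 1 N) : E.Δ n ≤ 5 := by
  have hN : 0 < N := (mem_Icc.1 hn).1.trans (mem_Icc.1 hn).2
  have hNmem : N ∈ Icc 1 N := mem_Icc.2 ⟨hN, le_rfl⟩
  have hrig := (abs_le.1 (hR.abs_lam_sub_mpQuantile_le hNmem)).2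
  have hNe : (N : ℝ) ^ (-2 / 3 + s / 2) ≤ 1 :=
    Real.rpow_le_one_of_one_le_of_nonpos (by exact_mod_cast hN) (by linarith)
  have hγ : mpQuantile d N N ≤ 4 := by
    rcases mpQuantile_eq_zero_or hd0 hd1 hN hN with h | ⟨-, -, h⟩
    · rw [h]; norm_num
    · exact h.trans (mpRightEdge_lt_four hd0 hd1).le
  have := E.lam_mono n N (mem_Icc.1 hn).1 (mem_Icc.1 hn).2 le_rfl
  unfold Δ; linarith [E.lam_pos]

lemma rpow_mul_le_sum (hR : E.CondR d s) (hN : 2 ≤ N) (j : ℕ) (t : ℝ) :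
    (N : ℝ) ^ (-2 * s) * E.Δ 2 ^ j * E.δ 2 ^ t ≤
      ∑ n ∈ Icc 2 N, E.ν n * E.Δ n ^ j * E.δ n ^ t := by
  have := E.Δ_nonneg (mem_Icc.2 ⟨one_le_two, hN⟩)
  have := Real.rpow_nonneg (E.δ_nonneg 2) t
  refine le_trans ?_ (E.ν_two_mul_le_sum hN j t)
  gcongr
  exact hR.rpow_le_ν_two (by omega)

lemma sum_le (hR : E.CondR d s) (hd0 : 0 < d) (hd1 : d < 1) (hs0 : 0 ≤ s)
    (hs : s ≤ 4 / 3) (hj : j ≤ 3) (ht : 0 ≤ t) {c K : ℝ} (hc : 0 ≤ c) (hK : 0 ≤ K)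
    (hN : 2 ≤ N) (hlam₁ : (1 + c) * (N : ℝ) ^ (-2 / 3 + s / 2) < E.lam 1)
    (hcount : ∀ n ∈ Icc 2 N, E.Δ n ≤ 2 * (1 + c) * E.Δ 2 →
      (n : ℝ) ≤ K * (N : ℝ) ^ (3 * s / 4)) :
    ∑ n ∈ Icc 2 N, E.ν n * E.Δ n ^ j * E.δ n ^ t ≤
      (K * (2 * (1 + c)) ^ 3 + 125) * E.δ 2 ^ t *
        ((N : ℝ) ^ (4 * s) * E.Δ 2 ^ j + (N : ℝ) ^ (1 + s) * E.δ 2 ^ (c * t)) := by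
  have hN0 : 0 < N := by omega
  have h2 : 2 ∈ Icc 1 N := mem_Icc.2 ⟨one_le_two, hN⟩
  have hsub : Icc 2 N ⊆ Icc 1 N := Icc_subset_Icc one_le_two le_rfl
  have hΔ₂ := E.Δ_nonneg h2
  have hδ₂ := Real.rpow_nonneg (E.δ_nonneg 2) t
  have hδ₂c := Real.rpow_nonneg (E.δ_nonneg 2) (c * t)
  have hpΔ : (1 + c) * E.Δ 2 ≤ E.lam 1 :=
    (mul_le_mul_of_nonneg_left hR.Δ_two_le (by positivity)).trans hlam₁.le
  calc _ ≤ K * (N : ℝ) ^ (3 * s / 4) *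
          ((N : ℝ) ^ (2 * s) * (2 * (1 + c)) ^ 3 * E.Δ 2 ^ j * E.δ 2 ^ t) +
        5 ^ 3 * (∑ n ∈ Icc 2 N, E.ν n) * E.δ 2 ^ ((1 + c) * t) :=
      E.sum_le_near_add_far hj ht hN (by linarith) hpΔ (fun n hn => hR.ν_le hN0 (hsub hn))
        (by positivity) hcount (by norm_num) (fun n hn => hR.Δ_le_five hd0 hd1 hs (hsub hn))
    _ = K * (2 * (1 + c)) ^ 3 * ((N : ℝ) ^ (3 * s / 4) * (N : ℝ) ^ (2 * s)) * E.Δ 2 ^ j *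
          E.δ 2 ^ t + 125 * (∑ n ∈ Icc 2 N, E.ν n) * (E.δ 2 ^ t * E.δ 2 ^ (c * t)) := by
      rw [add_mul, one_mul, Real.rpow_add (E.δ_pos h2)]; ring
    _ ≤ K * (2 * (1 + c)) ^ 3 * (N : ℝ) ^ (4 * s) * E.Δ 2 ^ j * E.δ 2 ^ t +
          125 * (N : ℝ) ^ (1 + s) * (E.δ 2 ^ t * E.δ 2 ^ (c * t)) := by
      have hNpow : (N : ℝ) ^ (3 * s / 4) * (N : ℝ) ^ (2 * s) ≤ (N : ℝ) ^ (4 * s) := by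
        rw [← Real.rpow_add (by positivity)]
        exact Real.rpow_le_rpow_of_exponent_le (by exact_mod_cast hN0) (by linarith)
      gcongr
      exact hR.sum_ν_le hN0
    _ ≤ _ := by
      have hX : 0 ≤ (N : ℝ) ^ (4 * s) * E.Δ 2 ^ j := by positivity
      have hY : 0 ≤ (N : ℝ) ^ (1 + s) * E.δ 2 ^ (c * t) := by positivity
      nlinarith [mul_nonneg hδ₂ hX, mul_nonneg (mul_nonneg hδ₂ hY)
        (by positivity : 0 ≤ K * (2 * (1 + c)) ^ 3)]

end CondR

lemma exists_eventually_abs_lam_one_sub_mpLeftEdge_le (hd0 : 0 < d) (hd1 : d < 1) (hs : 0 ≤ s) :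
    ∃ C > 0, ∀ᶠ N : ℕ in atTop, ∀ E : EigenData N, E.CondR d s →
      |E.lam 1 - mpLeftEdge d| ≤ C * (N : ℝ) ^ (-2 / 3 + s / 2) := by
  obtain ⟨k, hk, hF⟩ := exists_le_mpCDF hd0 hd1
  refine ⟨k ^ (-2 / 3 : ℝ) + 1, by positivity, ?_⟩
  have hlim := (tendsto_natCast_rpow_of_neg (by norm_num : (-2 / 3 : ℝ) < 0)).const_mul
    (k ^ (-2 / 3 : ℝ))
  rw [mul_zero] at hlim
  filter_upwards [eventually_gt_atTop 0, hlim.eventually (eventually_le_nhds (Real.sqrt_pos.2 hd0))]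
    with N hN hsmall E hR
  have hN' : (0 : ℝ) < N := Nat.cast_pos.2 hN
  -- at distance `h = (k N)^(-2/3)` from the edge the CDF already exceeds `1 / N`
  set h := k ^ (-2 / 3 : ℝ) * (N : ℝ) ^ (-2 / 3 : ℝ) with hh
  have hmass : ((1 : ℕ) : ℝ) / N ≤ mpCDF d (mpLeftEdge d + h) := by
    have : h ^ (3 / 2 : ℝ) = k⁻¹ * (N : ℝ)⁻¹ := by
      rw [Real.mul_rpow (by positivity) (by positivity), ← Real.rpow_mul hk.le,
        ← Real.rpow_mul hN'.le]
      norm_num [Real.rpow_neg_one]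
    refine le_of_eq_of_le ?_ (hF h (by positivity) hsmall)
    rw [this, Nat.cast_one]; field_simp
  have hγ := mpQuantile_mem_Icc_of_le_mpCDF hd0 hd1 one_pos hN hmass
  have hrig := hR.abs_lam_sub_mpQuantile_le (mem_Icc.2 ⟨le_rfl, hN⟩)
  have hexp : (N : ℝ) ^ (-2 / 3 : ℝ) ≤ (N : ℝ) ^ (-2 / 3 + s / 2) :=
    Real.rpow_le_rpow_of_exponent_le (by exact_mod_cast hN) (by linarith)
  have := mul_le_mul_of_nonneg_left hexp (by positivity : 0 ≤ k ^ (-2 / 3 : ℝ))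
  rw [abs_le] at hrig ⊢
  constructor <;> nlinarith [hγ.1, hγ.2, Real.rpow_nonneg hN'.le (-2 / 3 + s / 2)]

lemma eventually_mul_rpow_lt_lam_one (hd0 : 0 < d) (hd1 : d < 1) (hs0 : 0 ≤ s) (hs : s < 4 / 3)
    (b : ℝ) : ∀ᶠ N : ℕ in atTop, ∀ E : EigenData N, E.CondR d s →
      b * (N : ℝ) ^ (-2 / 3 + s / 2) < E.lam 1 := by
  obtain ⟨C, -, hC⟩ := exists_eventually_abs_lam_one_sub_mpLeftEdge_le hd0 hd1 hs0
  have hlim := (tendsto_natCast_rpow_of_neg (by linarith : -2 / 3 + s / 2 < 0)).const_mul (b + C)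
  rw [mul_zero] at hlim
  filter_upwards [hC, hlim.eventually (eventually_lt_nhds (mpLeftEdge_pos hd1))]
    with N hlam hsmall E hR
  linarith [(abs_le.1 (hlam E hR)).1]

lemma exists_natCast_le_of_lam_le (hd0 : 0 < d) (hd1 : d < 1) {b : ℝ} (hb : 0 ≤ b) :
    ∃ K > 0, ∀ N : ℕ, ∀ E : EigenData N, E.CondR d s → ∀ n ∈ Icc 1 N,
      (N : ℝ) ^ (-2 / 3 + s / 2) < E.lam n →
      E.lam n ≤ mpLeftEdge d + b * (N : ℝ) ^ (-2 / 3 + s / 2) →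
      (n : ℝ) ≤ K * (N : ℝ) ^ (3 * s / 4) := by
  obtain ⟨k, hk, hF⟩ := exists_mpCDF_le hd0 hd1
  refine ⟨k * (b + 1) ^ (3 / 2 : ℝ), by positivity, fun N E hR n hn hlow hup => ?_⟩
  have hn0 : 0 < n := (mem_Icc.1 hn).1
  have hN : 0 < N := hn0.trans_le (mem_Icc.1 hn).2
  have hN' : (0 : ℝ) < N := Nat.cast_pos.2 hN
  have hrig := abs_le.1 (hR.abs_lam_sub_mpQuantile_le hn)
  rcases mpQuantile_eq_zero_or hd0 hd1 hn0 hN with h0 | ⟨hFγ, hLγ, -⟩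
  · rw [h0] at hrig; linarith [hrig.2]
  have hw : mpQuantile d N n - mpLeftEdge d ≤ (b + 1) * (N : ℝ) ^ (-2 / 3 + s / 2) := by
    linarith [hrig.1]
  have hcdf := hF _ (sub_nonneg.2 hLγ)
  rw [add_sub_cancel, hFγ] at hcdf
  have := (div_le_iff₀' hN').1 (hcdf.trans (mul_le_mul_of_nonneg_left
    (Real.rpow_le_rpow (sub_nonneg.2 hLγ) hw (by norm_num)) hk.le))
  refine this.trans (le_of_eq ?_)
  rw [Real.mul_rpow (by positivity) (by positivity), ← Real.rpow_mul hN'.le,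
    show 3 * s / 4 = 1 + (-2 / 3 + s / 2) * (3 / 2) by ring, Real.rpow_add hN', Real.rpow_one]
  ring

lemma exists_eventually_natCast_le_of_Δ_le (hd0 : 0 < d) (hd1 : d < 1) (hs0 : 0 ≤ s)
    (hs : s < 4 / 3) {a : ℝ} (ha : 0 ≤ a) :
    ∃ K > 0, ∀ᶠ N : ℕ in atTop, ∀ E : EigenData N, E.CondR d s → ∀ n ∈ Icc 1 N,
      E.Δ n ≤ a * E.Δ 2 → (n : ℝ) ≤ K * (N : ℝ) ^ (3 * s / 4) := by
  obtain ⟨C, hC, hlam₁⟩ := exists_eventually_abs_lam_one_sub_mpLeftEdge_le hd0 hd1 hs0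
  obtain ⟨K, hK, hcount⟩ :=
    exists_natCast_le_of_lam_le (s := s) hd0 hd1 (b := C + a) (by positivity)
  refine ⟨K, hK, ?_⟩
  filter_upwards [hlam₁, eventually_mul_rpow_lt_lam_one hd0 hd1 hs0 hs 1]
    with N hedge hlarge E hR n hn hΔn
  have hlam : E.lam n = E.lam 1 + E.Δ n := by unfold Δ; ring
  have := mul_le_mul_of_nonneg_left hR.Δ_two_le ha
  exact hcount N E hR n hn (by linarith [E.Δ_nonneg hn, hlarge E hR])
    (by linarith [(abs_le.1 (hedge E hR)).2])

end EigenData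

theorem weighted_sum_estimate_general (d σ s c : ℝ) (j : ℕ)
    (hd0 : 0 < d) (hd1 : d < 1)
    (hσ1 : σ < 1 / 3)
    (hs0 : 0 < s) (hs1 : s < σ / 40)
    (hc0 : 0 < c) (hj : j ≤ 3) :
    ∃ C > 0, ∃ N₀ : ℕ, ∀ N : ℕ, N₀ ≤ N → ∀ E : EigenData N, E.CondR d s →
      ∀ t : ℝ, 0 ≤ t →
        (N : ℝ) ^ (-2 * s) * E.Δ 2 ^ j * E.δ 2 ^ t ≤
            ∑ n ∈ Finset.Icc 2 N, E.ν n * E.Δ n ^ j * E.δ n ^ t ∧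
          ∑ n ∈ Finset.Icc 2 N, E.ν n * E.Δ n ^ j * E.δ n ^ t ≤
            C * E.δ 2 ^ t *
              ((N : ℝ) ^ (4 * s) * E.Δ 2 ^ j + (N : ℝ) ^ (1 + s) * E.δ 2 ^ (c * t)) := by
  have hs : s < 4 / 3 := by linarith
  obtain ⟨K, hK, hcount⟩ := EigenData.exists_eventually_natCast_le_of_Δ_le hd0 hd1 hs0.le hs
    (a := 2 * (1 + c)) (by positivity)
  obtain ⟨N₀, hN₀⟩ := eventually_atTop.1 ((eventually_ge_atTop 2).and
    (hcount.and (EigenData.eventually_mul_rpow_lt_lam_one hd0 hd1 hs0.le hs (1 + c))))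
  refine ⟨K * (2 * (1 + c)) ^ 3 + 125, by positivity, N₀, fun N hN E hR t ht => ?_⟩
  obtain ⟨hN2, hnear, hlam₁⟩ := hN₀ N hN
  exact ⟨hR.rpow_mul_le_sum hN2 j t, hR.sum_le hd0 hd1 hs0.le hs.le hj ht hc0.le hK.le hN2
    (hlam₁ E hR) fun n hn => hnear E hR n (Icc_subset_Icc one_le_two le_rfl hn)⟩

/-- Key sum estimate: given Condition R(N,s), for `j ≤ 3`,
`N^{-2s} Δ₂^j δ₂^t ≤ ∑_{n=2}^N ν_n Δ_n^j δ_n^t ≤ C δ₂^t (N^{4s} Δ₂^j + N^{1+s} δ₂^{ct})`. -/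
theorem weighted_sum_estimate (d σ s c : ℝ) (j : ℕ)
    (hd0 : 0 < d) (hd1 : d < 1)
    (hσ0 : 0 < σ) (hσ1 : σ < 1 / 3)
    (hs0 : 0 < s) (hs1 : s < σ / 40)
    (hc0 : 0 < c) (hc1 : c < 10 / σ) (hj : j ≤ 3) :
    ∃ C > 0, ∃ N₀ : ℕ, ∀ N : ℕ, N₀ ≤ N → ∀ E : EigenData N, E.CondR d s →
      ∀ t : ℝ, 0 ≤ t →
        (N : ℝ) ^ (-2 * s) * E.Δ 2 ^ j * E.δ 2 ^ t ≤
            ∑ n ∈ Finset.Icc 2 N, E.ν n * E.Δ n ^ j * E.δ n ^ t ∧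
          ∑ n ∈ Finset.Icc 2 N, E.ν n * E.Δ n ^ j * E.δ n ^ t ≤
            C * E.δ 2 ^ t *
              ((N : ℝ) ^ (4 * s) * E.Δ 2 ^ j + (N : ℝ) ^ (1 + s) * E.δ 2 ^ (c * t)) :=
  weighted_sum_estimate_general d σ s c j hd0 hd1 hσ1 hs0 hs1 hc0 hj
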